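/- For every v ∈ 𝕂^{r+1} with A·v = 0, the polynomial g_v lies in the ideal ⟨g_1,…,g_{r−c}⟩ of 𝕂[T_{ij},S_k]. Moreover, if B is a subset of the kernel of A that spans the kernel of A as a 𝕂-vector space, then the polynomials g_v, v ∈ B, generate the ideal ⟨g_1,…,g_{r−c}⟩. -/

import Mathlib

open MvPolynomial

noncomputable section

/-- Index type for the variables `T i j` (`Sum.inl ⟨i, j⟩`) and `S k` (`Sum.inr k`). -/
abbrev VarIdx (r m : ℕ) (nn : Fin (r + 1) → ℕ) : Type :=
  (Σ i : Fin (r + 1), Fin (nn i)) ⊕ Fin m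

variable (𝕂 : Type) [Field 𝕂]

/-- The monomial `T_i^{l_i} = ∏_j T_{ij}^{l_{ij}}`. -/
def Tmon (r m : ℕ) (nn : Fin (r + 1) → ℕ)
    (l : ∀ i : Fin (r + 1), Fin (nn i) → ℕ) (i : Fin (r + 1)) :
    MvPolynomial (VarIdx r m nn) 𝕂 :=
  ∏ j : Fin (nn i), (X (Sum.inl ⟨i, j⟩) : MvPolynomial (VarIdx r m nn) 𝕂) ^ l i j

/-- The map sending a column index of the `(c+2)×(c+2)` matrix defining `g_t`
to the corresponding column index of `A`, namely `0, …, c, c + (t+1)`. -/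
def colOf (r c : ℕ) (hcr : c ≤ r) (t : Fin (r - c)) (p : Fin (c + 2)) : Fin (r + 1) :=
  if h : (p : ℕ) ≤ c then ⟨p, by omega⟩
  else ⟨c + 1 + t, by have := t.isLt; omega⟩

/-- The polynomial `g_t`: the determinant of the `(c+2)×(c+2)` matrix whose first
`c+1` rows are formed by the columns `a_0, …, a_c, a_{c+t}` of `A` (as constant
polynomials) and whose last row is `(T_0^{l_0}, …, T_c^{l_c}, T_{c+t}^{l_{c+t}})`. -/
def gPoly (r c m : ℕ) (hcr : c ≤ r) (nn : Fin (r + 1) → ℕ)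
    (l : ∀ i : Fin (r + 1), Fin (nn i) → ℕ)
    (A : Matrix (Fin (c + 1)) (Fin (r + 1)) 𝕂) (t : Fin (r - c)) :
    MvPolynomial (VarIdx r m nn) 𝕂 :=
  Matrix.det (Matrix.of fun q p : Fin (c + 2) =>
    if h : (q : ℕ) < c + 1 then C (A ⟨q, h⟩ (colOf r c hcr t p))
    else Tmon 𝕂 r m nn l (colOf r c hcr t p))

/-- The ring `R = 𝕂[T_{ij}, S_k] / ⟨g_1, …, g_{r-c}⟩`. -/
abbrev RingAP (r c m : ℕ) (hcr : c ≤ r) (nn : Fin (r + 1) → ℕ)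
    (l : ∀ i : Fin (r + 1), Fin (nn i) → ℕ)
    (A : Matrix (Fin (c + 1)) (Fin (r + 1)) 𝕂) : Type :=
  MvPolynomial (VarIdx r m nn) 𝕂 ⧸ Ideal.span (Set.range (gPoly 𝕂 r c m hcr nn l A))

end

noncomputable section
variable (𝕂 : Type) [Field 𝕂]

/-- The polynomial `g_v = v_0 T_0^{l_0} + ⋯ + v_r T_r^{l_r}`. -/
def gv (r m : ℕ) (nn : Fin (r + 1) → ℕ)
    (l : ∀ i : Fin (r + 1), Fin (nn i) → ℕ) (v : Fin (r + 1) → 𝕂) :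
    MvPolynomial (VarIdx r m nn) 𝕂 :=
  ∑ i : Fin (r + 1), C (v i) * Tmon 𝕂 r m nn l i

end

/-!
Expanding the determinant `g_t` along its last row gives `g_t = g_{w_t}`, where `w_t` is the
vector of signed maximal minors of the columns `a_0, …, a_c, a_{c+t}`, placed at those indices;
such a vector lies in `ker A`. Its coordinates beyond `c` are `det (a_0 | ⋯ | a_c) ≠ 0` at `c + t`
and `0` elsewhere, while a kernel vector vanishing beyond `c` is zero because `a_0, …, a_c` are
independent; hence the `w_t` span `ker A`. Since `v ↦ g_v` is linear, the ideal generated by the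
`g_v` with `v` in a spanning set of `ker A` does not depend on the spanning set.
-/

namespace Matrix

variable {R : Type*} [CommRing R] {n : ℕ}

def signedMinors (a : Matrix (Fin n) (Fin (n + 1)) R) (p : Fin (n + 1)) : R :=
  (-1) ^ (n + (p : ℕ)) * (a.submatrix id p.succAbove).det

theorem det_of_snoc (a : Matrix (Fin n) (Fin (n + 1)) R) (u : Fin (n + 1) → R) :
    (of (Fin.snoc (fun i => a i) u)).det = ∑ p, u p * a.signedMinors p := by
  rw [det_succ_row _ (Fin.last n)]
  refine Finset.sum_congr rfl fun p _ => ?_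
  have hminor : (of (Fin.snoc (fun i => a i) u)).submatrix
      (Fin.last n).succAbove p.succAbove = a.submatrix id p.succAbove := by
    ext i j
    simp [Fin.succAbove_last]
  rw [hminor, signedMinors, of_apply, Fin.snoc_last, Fin.val_last]
  ring

theorem mulVec_signedMinors (a : Matrix (Fin n) (Fin (n + 1)) R) : a *ᵥ a.signedMinors = 0 := by
  funext q
  rw [mulVec, dotProduct, Pi.zero_apply, ← det_of_snoc]
  refine det_zero_of_row_eq (i := q.castSucc) (j := Fin.last n) (Fin.castSucc_ne_last q) ?_
  funext p
  simp only [of_apply, Fin.snoc_castSucc, Fin.snoc_last]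

theorem signedMinors_map {S : Type*} [CommRing S] (f : R →+* S)
    (a : Matrix (Fin n) (Fin (n + 1)) R) : (a.map f).signedMinors = f ∘ a.signedMinors := by
  funext p
  simp [signedMinors, RingHom.map_det, RingHom.mapMatrix_apply, submatrix_map]

theorem signedMinors_last (a : Matrix (Fin n) (Fin (n + 1)) R) :
    a.signedMinors (Fin.last n) = (a.submatrix id Fin.castSucc).det := by
  rw [signedMinors, Fin.val_last, ← two_mul, pow_mul, neg_one_sq, one_pow, one_mul,
    Fin.succAbove_last]

theorem mulVec_eq_submatrix_mulVec_comp {m k ι : Type*} [Fintype k] [Fintype ι]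
    (A : Matrix m ι R) {e : k → ι} (he : e.Injective) {v : ι → R}
    (hv : ∀ i ∉ Set.range e, v i = 0) : A *ᵥ v = A.submatrix id e *ᵥ (v ∘ e) := by
  funext q
  refine (Fintype.sum_of_injective e he _ _ (fun i hi => ?_) fun p => rfl).symm
  rw [hv i hi, mul_zero]

end Matrix

theorem Submodule.eq_span_of_disjoint_ker {R M N : Type*} [Ring R] [AddCommGroup M] [Module R M]
    [AddCommGroup N] [Module R N] {K : Submodule R M} {s : Set M} (hs : s ⊆ K) (f : M →ₗ[R] N)
    (hK : Disjoint K (LinearMap.ker f)) (hf : (span R s).map f = ⊤) : K = span R s := by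
  refine le_antisymm (fun v hv => ?_) (span_le.mpr hs)
  obtain ⟨u, hu, hfu⟩ : f v ∈ (span R s).map f := hf ▸ mem_top
  have huv : u - v = 0 := disjoint_def.mp hK _ (sub_mem (span_le.mpr hs hu) hv)
    (by rw [LinearMap.mem_ker, map_sub, hfu, sub_self])
  rwa [← sub_eq_zero.mp huv]

theorem Ideal.span_image_span {K V R : Type*} [CommSemiring K] [AddCommMonoid V] [Module K V]
    [CommSemiring R] [Algebra K R] (f : V →ₗ[K] R) (s : Set V) :
    Ideal.span (f '' Submodule.span K s) = Ideal.span (f '' s) := by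
  rw [← Submodule.map_coe, Submodule.map_span]
  exact Submodule.span_span_of_tower K R _

section

open Matrix

variable {𝕂 : Type} [Field 𝕂] {r c : ℕ}

def highCol (r c : ℕ) (t : Fin (r - c)) : Fin (r + 1) :=
  ⟨c + 1 + t, by omega⟩

theorem exists_highCol_of_notMem_range_castLE (hcr : c ≤ r) {i : Fin (r + 1)}
    (hi : i ∉ Set.range (Fin.castLE (Nat.succ_le_succ hcr))) : ∃ t, highCol r c t = i := by
  have hci : c + 1 ≤ (i : ℕ) := by
    by_contra! h
    exact hi ⟨⟨i, h⟩, rfl⟩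
  exact ⟨⟨i - (c + 1), by omega⟩, Fin.ext (by simp only [highCol]; omega)⟩

theorem colOf_castSucc (hcr : c ≤ r) (t : Fin (r - c)) (p : Fin (c + 1)) :
    colOf r c hcr t p.castSucc = Fin.castLE (Nat.succ_le_succ hcr) p := by
  rw [colOf, dif_pos (by simpa using Nat.lt_succ_iff.mp p.isLt)]
  rfl

theorem colOf_last (hcr : c ≤ r) (t : Fin (r - c)) :
    colOf r c hcr t (Fin.last (c + 1)) = highCol r c t := by
  rw [colOf, dif_neg (by simp)]
  rfl

theorem colOf_injective (hcr : c ≤ r) (t : Fin (r - c)) : (colOf r c hcr t).Injective := by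
  intro p q hpq
  have := congrArg Fin.val hpq
  unfold colOf at this
  split_ifs at this <;> simp only at this <;> omega

variable (A : Matrix (Fin (c + 1)) (Fin (r + 1)) 𝕂)

noncomputable def kerVec (hcr : c ≤ r) (t : Fin (r - c)) : Fin (r + 1) → 𝕂 :=
  Function.extend (colOf r c hcr t) (A.submatrix id (colOf r c hcr t)).signedMinors 0

theorem mulVec_kerVec (hcr : c ≤ r) (t : Fin (r - c)) : A *ᵥ kerVec A hcr t = 0 := by
  rw [A.mulVec_eq_submatrix_mulVec_comp (colOf_injective hcr t)
      (fun i hi => by rw [kerVec, Function.extend_apply' _ _ _ hi, Pi.zero_apply]),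
    kerVec, Function.extend_comp (colOf_injective hcr t), mulVec_signedMinors]

theorem funLeft_highCol_kerVec (hcr : c ≤ r) (t : Fin (r - c)) :
    LinearMap.funLeft 𝕂 𝕂 (highCol r c) (kerVec A hcr t) =
      (A.submatrix id (Fin.castLE (Nat.succ_le_succ hcr))).det • Pi.single t 1 := by
  funext s
  rw [LinearMap.funLeft_apply, Pi.smul_apply, smul_eq_mul]
  by_cases hst : s = t
  · subst hst
    rw [Pi.single_eq_same, mul_one, ← colOf_last hcr, kerVec, (colOf_injective hcr s).extend_apply,
      signedMinors_last, submatrix_submatrix]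
    congr 2
    exact funext (colOf_castSucc hcr s)
  · rw [Pi.single_eq_of_ne hst, mul_zero, kerVec, Function.extend_apply', Pi.zero_apply]
    rintro ⟨p, hp⟩
    have := congrArg Fin.val hp
    have hst' : (s : ℕ) ≠ t := Fin.val_ne_of_ne hst
    unfold colOf highCol at this
    split_ifs at this <;> simp only at this <;> omega

variable {A}

theorem isUnit_submatrix_castLE (hcr : c ≤ r)
    (hA : ∀ s : Finset (Fin (r + 1)), s.card = c + 1 →
      LinearIndependent 𝕂 fun j : s => A.transpose (j : Fin (r + 1))) :
    IsUnit (A.submatrix id (Fin.castLE (Nat.succ_le_succ hcr))) := by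
  rw [← linearIndependent_cols_iff_isUnit]
  let e := Fin.castLEEmb (Nat.succ_le_succ hcr)
  exact (hA (Finset.univ.map e) (by simp)).comp (fun p => ⟨e p, by simp⟩)
    fun p q hpq => e.injective (congrArg Subtype.val hpq)

theorem disjoint_ker_mulVecLin_ker_funLeft_highCol (hcr : c ≤ r)
    (hA : IsUnit (A.submatrix id (Fin.castLE (Nat.succ_le_succ hcr)))) :
    Disjoint (LinearMap.ker A.mulVecLin) (LinearMap.ker (LinearMap.funLeft 𝕂 𝕂 (highCol r c))) := by
  rw [Submodule.disjoint_def]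
  intro v hv hhigh
  have hoff : ∀ i ∉ Set.range (Fin.castLE (Nat.succ_le_succ hcr)), v i = 0 := fun i hi => by
    obtain ⟨t, rfl⟩ := exists_highCol_of_notMem_range_castLE hcr hi
    exact congrFun hhigh t
  have hlow : v ∘ Fin.castLE (Nat.succ_le_succ hcr) = 0 :=
    mulVec_injective_iff_isUnit.mpr hA <| by
      rw [← A.mulVec_eq_submatrix_mulVec_comp (Fin.castLE_injective _) hoff, mulVec_zero]
      exact hv
  funext i
  by_cases hi : i ∈ Set.range (Fin.castLE (Nat.succ_le_succ hcr))
  · obtain ⟨p, rfl⟩ := hi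
    exact congrFun hlow p
  · exact hoff i hi

theorem ker_mulVecLin_eq_span_range_kerVec (hcr : c ≤ r)
    (hA : IsUnit (A.submatrix id (Fin.castLE (Nat.succ_le_succ hcr)))) :
    LinearMap.ker A.mulVecLin = Submodule.span 𝕂 (Set.range (kerVec A hcr)) := by
  refine Submodule.eq_span_of_disjoint_ker (Set.range_subset_iff.mpr (mulVec_kerVec A hcr))
    (LinearMap.funLeft 𝕂 𝕂 (highCol r c)) (disjoint_ker_mulVecLin_ker_funLeft_highCol hcr hA) ?_
  have hd := (isUnit_iff_isUnit_det _).mp hA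
  rw [Submodule.map_span, ← Set.range_comp, Function.comp_def]
  simp_rw [funLeft_highCol_kerVec, ← Set.smul_set_range, Submodule.span_smul_eq_of_isUnit _ _ hd]
  simpa only [← Pi.basisFun_apply] using (Pi.basisFun 𝕂 (Fin (r - c))).span_eq

end

section

variable {𝕂 : Type} [Field 𝕂] {r c m : ℕ} {nn : Fin (r + 1) → ℕ}
  (l : ∀ i : Fin (r + 1), Fin (nn i) → ℕ)

theorem gv_eq_linearCombination :
    gv 𝕂 r m nn l = Fintype.linearCombination 𝕂 (Tmon 𝕂 r m nn l) :=
  funext fun v => by simp [gv, Fintype.linearCombination_apply, smul_eq_C_mul]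

theorem gPoly_eq_sum (hcr : c ≤ r) (A : Matrix (Fin (c + 1)) (Fin (r + 1)) 𝕂) (t : Fin (r - c)) :
    gPoly 𝕂 r c m hcr nn l A t = ∑ p, Tmon 𝕂 r m nn l (colOf r c hcr t p) *
      C ((A.submatrix id (colOf r c hcr t)).signedMinors p) := by
  have hrows : (Matrix.of fun q p : Fin (c + 2) =>
      if h : (q : ℕ) < c + 1 then C (A ⟨q, h⟩ (colOf r c hcr t p))
      else Tmon 𝕂 r m nn l (colOf r c hcr t p)) =
      Matrix.of (Fin.snoc (fun i => (A.submatrix id (colOf r c hcr t)).map C i)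
        fun p => Tmon 𝕂 r m nn l (colOf r c hcr t p)) := by
    refine Matrix.ext fun q p => ?_
    induction q using Fin.lastCases <;> simp [Fin.is_le]
  rw [gPoly, hrows, Matrix.det_of_snoc, Matrix.signedMinors_map]
  rfl

theorem gv_kerVec (hcr : c ≤ r) (A : Matrix (Fin (c + 1)) (Fin (r + 1)) 𝕂) (t : Fin (r - c)) :
    gv 𝕂 r m nn l (kerVec A hcr t) = gPoly 𝕂 r c m hcr nn l A t := by
  rw [gPoly_eq_sum, gv]
  refine (Fintype.sum_of_injective _ (colOf_injective hcr t) _ _ (fun i hi => ?_) fun p => ?_).symm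
  · rw [kerVec, Function.extend_apply' _ _ _ hi, Pi.zero_apply, map_zero, zero_mul]
  · rw [kerVec, (colOf_injective hcr t).extend_apply, mul_comm]

end

theorem statement_11_general
    (𝕂 : Type) [Field 𝕂]
    (r c m : ℕ) (hcr : c ≤ r)
    (nn : Fin (r + 1) → ℕ)
    (l : ∀ i : Fin (r + 1), Fin (nn i) → ℕ)
    (A : Matrix (Fin (c + 1)) (Fin (r + 1)) 𝕂)
    (hA : ∀ s : Finset (Fin (r + 1)), s.card = c + 1 →
      LinearIndependent 𝕂 fun j : s => A.transpose (j : Fin (r + 1)))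
    :
    (∀ v : Fin (r + 1) → 𝕂, A.mulVec v = 0 →
      gv 𝕂 r m nn l v ∈ Ideal.span (Set.range (gPoly 𝕂 r c m hcr nn l A))) ∧
    (∀ B : Set (Fin (r + 1) → 𝕂),
      Submodule.span 𝕂 B = LinearMap.ker A.mulVecLin →
      Ideal.span (gv 𝕂 r m nn l '' B) =
        Ideal.span (Set.range (gPoly 𝕂 r c m hcr nn l A))) := by
  have hgPoly : gv 𝕂 r m nn l ∘ kerVec A hcr = gPoly 𝕂 r c m hcr nn l A :=
    funext (gv_kerVec l hcr A)
  have hspan : Ideal.span (Set.range (gPoly 𝕂 r c m hcr nn l A)) =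
      Ideal.span (gv 𝕂 r m nn l '' LinearMap.ker A.mulVecLin) := by
    rw [← hgPoly, Set.range_comp, ker_mulVecLin_eq_span_range_kerVec hcr
      (isUnit_submatrix_castLE hcr hA), gv_eq_linearCombination, Ideal.span_image_span]
  rw [hspan]
  refine ⟨fun v hv => Ideal.subset_span ⟨v, hv, rfl⟩, fun B hB => ?_⟩
  rw [gv_eq_linearCombination, ← Ideal.span_image_span, hB]

/-- For every `v ∈ 𝕂^{r+1}` with `A·v = 0`, the polynomial `g_v`
lies in the ideal `⟨g_1,…,g_{r−c}⟩`; moreover, if `B` spans the kernel of `A` as a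
`𝕂`-vector space, then the polynomials `g_v`, `v ∈ B`, generate this ideal. -/
theorem statement_11
    (𝕂 : Type) [Field 𝕂] [IsAlgClosed 𝕂] [CharZero 𝕂]
    (r c m : ℕ) (hc : 0 < c) (hcr : c ≤ r)
    (nn : Fin (r + 1) → ℕ) (hnn : ∀ i, 0 < nn i)
    (l : ∀ i : Fin (r + 1), Fin (nn i) → ℕ) (hl : ∀ i j, 0 < l i j)
    (A : Matrix (Fin (c + 1)) (Fin (r + 1)) 𝕂)
    (hA : ∀ s : Finset (Fin (r + 1)), s.card = c + 1 →
      LinearIndependent 𝕂 fun j : s => A.transpose (j : Fin (r + 1)))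
    :
    (∀ v : Fin (r + 1) → 𝕂, A.mulVec v = 0 →
      gv 𝕂 r m nn l v ∈ Ideal.span (Set.range (gPoly 𝕂 r c m hcr nn l A))) ∧
    (∀ B : Set (Fin (r + 1) → 𝕂),
      Submodule.span 𝕂 B = LinearMap.ker A.mulVecLin →
      Ideal.span (gv 𝕂 r m nn l '' B) =
        Ideal.span (Set.range (gPoly 𝕂 r c m hcr nn l A))) :=
  statement_11_general 𝕂 r c m hcr nn l A hA
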